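/- The weight-5 multiple zeta values satisfy 4ζ(1,4) − 2ζ(2,3) − ζ(3,2) + ζ(1,1,3) + 3ζ(1,2,2) = 0. -/

import Mathlib

/-- Multiple zeta value `ζ(k₁,…,k_r) = Σ_{0<m₁<⋯<m_r} ∏ mᵢ^{-kᵢ}`. -/
noncomputable def mzv (k : List ℕ) : ℝ :=
  ∑' m : {f : Fin k.length → ℕ+ // StrictMono f},
    ∏ i : Fin k.length, ((m.1 i : ℝ) ^ (k.get i))⁻¹

/-!
All series are handled in `ℝ≥0∞`, where a series of nonnegative terms can be rearranged freely,
and are transferred to `ℝ` only at the end, once each of them is known to converge.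

Comparing the summation indices expands `ζ(2)ζ(3)` and `ζ(2)ζ(1,2)` (stuffle). The partial
fraction `1/(mu) = 1/((m+u)m) + 1/((m+u)u)` reduces the Tornheim sums `Σ m⁻ᵃ u⁻ᵇ (m+u)⁻ᶜ`, and
their analogues in three variables, to multiple zeta values; in particular it expands
`ζ(2)ζ(3) = T(2,3,0)` a second time (shuffle). The telescoping sum `Σ_v 1/(v(n+v)) = H_n/n`
evaluates `T(s,1,1)` and `Σ m⁻ᵃ (m+u)⁻ᵇ v⁻¹ (m+u+v)⁻¹` in another way, through harmonic numbers,
which expand into multiple zeta values again; for `T(1,1,1)` this is Euler's `ζ(1,2) = ζ(3)`.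
The seven resulting linear relations eliminate `ζ(5)`, `ζ(2)ζ(3)` and `ζ(2,1,2)`, leaving the
claim.
-/

open scoped ENNReal
open Filter Topology

namespace MZV

noncomputable def invPow (n : ℕ+) (a : ℕ) : ℝ≥0∞ := ENNReal.ofReal ((n : ℝ) ^ a)⁻¹

theorem invPow_ne_top (n : ℕ+) (a : ℕ) : invPow n a ≠ ∞ := ENNReal.ofReal_ne_top

theorem toReal_invPow (n : ℕ+) (a : ℕ) : (invPow n a).toReal = ((n : ℝ) ^ a)⁻¹ :=
  ENNReal.toReal_ofReal (by positivity)

@[simp] theorem invPow_zero (n : ℕ+) : invPow n 0 = 1 := by simp [invPow]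

theorem invPow_mul_invPow (n : ℕ+) (a b : ℕ) : invPow n a * invPow n b = invPow n (a + b) := by
  rw [invPow, invPow, invPow, ← ENNReal.ofReal_mul (by positivity), pow_add, mul_inv]

theorem invPow_succ (n : ℕ+) (a : ℕ) : invPow n (a + 1) = invPow n a * invPow n 1 :=
  (invPow_mul_invPow n a 1).symm

theorem invPow_le_invPow {a b : ℕ} (h : a ≤ b) (n : ℕ+) : invPow n b ≤ invPow n a :=
  ENNReal.ofReal_le_ofReal <| inv_anti₀ (by positivity) <|
    pow_le_pow_right₀ (by exact_mod_cast n.pos) h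

theorem invPow_one_mul_invPow_one (m u : ℕ+) :
    invPow m 1 * invPow u 1 = invPow (m + u) 1 * (invPow m 1 + invPow u 1) := by
  simp only [invPow, pow_one]
  rw [← ENNReal.ofReal_add (by positivity) (by positivity), ← ENNReal.ofReal_mul (by positivity),
    ← ENNReal.ofReal_mul (by positivity)]
  congr 1
  push_cast
  field_simp
  ring

theorem invPow_partial_fraction (x y : ℕ+) (a b c : ℕ) :
    invPow x (a + 1) * invPow y (b + 1) * invPow (x + y) c =
      invPow x (a + 1) * invPow y b * invPow (x + y) (c + 1) +
        invPow x a * invPow y (b + 1) * invPow (x + y) (c + 1) := by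
  rw [invPow_succ x a, invPow_succ y b, invPow_succ (x + y) c]
  calc _ = invPow x a * invPow y b * invPow (x + y) c * (invPow x 1 * invPow y 1) := by ring
    _ = _ := by rw [invPow_one_mul_invPow_one]; ring

noncomputable def emzv (k : List ℕ) : ℝ≥0∞ :=
  ∑' m : {f : Fin k.length → ℕ+ // StrictMono f}, ∏ i, invPow (m.1 i) (k.get i)

/- No convergence hypothesis is needed: a divergent `mzv k` is `0` by the `tsum` convention, and
`(∞ : ℝ≥0∞).toReal = 0`. -/
theorem mzv_eq_toReal_emzv (k : List ℕ) : mzv k = (emzv k).toReal := by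
  rw [emzv, ENNReal.tsum_toReal_eq fun _ => ENNReal.prod_ne_top fun _ _ => invPow_ne_top _ _]
  simp only [ENNReal.toReal_prod, toReal_invPow, mzv]

def finTwoStrictMonoEquiv : ℕ+ × ℕ+ ≃ {f : Fin 2 → ℕ+ // StrictMono f} where
  toFun p := ⟨![p.1, p.1 + p.2], Fin.strictMono_iff_lt_succ.2 fun i => by
    fin_cases i; exact PNat.lt_add_right _ _⟩
  invFun f := (f.1 0, f.1 1 - f.1 0)
  left_inv p := by simp [add_comm p.1, PNat.add_sub]
  right_inv f := by
    ext i
    fin_cases i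
    · rfl
    · exact PNat.add_sub_of_lt (f.2 (by decide))

def finThreeStrictMonoEquiv : ℕ+ × ℕ+ × ℕ+ ≃ {f : Fin 3 → ℕ+ // StrictMono f} where
  toFun p := ⟨![p.1, p.1 + p.2.1, p.1 + p.2.1 + p.2.2], Fin.strictMono_iff_lt_succ.2 fun i => by
    fin_cases i <;> exact PNat.lt_add_right _ _⟩
  invFun f := (f.1 0, f.1 1 - f.1 0, f.1 2 - f.1 1)
  left_inv := fun ⟨m, u, v⟩ => by
    change (m, m + u - m, m + u + v - (m + u)) = (m, u, v)
    rw [add_comm m u, add_comm (u + m) v, PNat.add_sub, PNat.add_sub]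
  right_inv f := by
    have h01 := PNat.add_sub_of_lt (f.2 (show (0 : Fin 3) < 1 by decide))
    have h12 := PNat.add_sub_of_lt (f.2 (show (1 : Fin 3) < 2 by decide))
    ext i
    fin_cases i
    · rfl
    · exact h01
    · simp [h01, h12]

theorem emzv_singleton (a : ℕ) : emzv [a] = ∑' n : ℕ+, invPow n a := by
  let e : ℕ+ ≃ {f : Fin 1 → ℕ+ // StrictMono f} :=
    { toFun n := ⟨fun _ => n, Subsingleton.strictMono _⟩
      invFun f := f.1 0
      left_inv _ := rfl
      right_inv f := by ext i; rw [Subsingleton.elim i 0] }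
  calc emzv [a] = ∑' n, ∏ i, invPow ((e n).1 i) ([a].get i) := (e.tsum_eq _).symm
    _ = _ := by simp [e]

theorem emzv_pair (a b : ℕ) :
    emzv [a, b] = ∑' (m : ℕ+) (u : ℕ+), invPow m a * invPow (m + u) b := by
  calc emzv [a, b] = ∑' p, ∏ i, invPow ((finTwoStrictMonoEquiv p).1 i) ([a, b].get i) :=
        (finTwoStrictMonoEquiv.tsum_eq _).symm
    _ = _ := by simp [finTwoStrictMonoEquiv, Fin.prod_univ_two, ENNReal.tsum_prod']

theorem emzv_triple (a b c : ℕ) : emzv [a, b, c] =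
    ∑' (m : ℕ+) (u : ℕ+) (v : ℕ+), invPow m a * invPow (m + u) b * invPow (m + u + v) c := by
  calc emzv [a, b, c] = ∑' p, ∏ i, invPow ((finThreeStrictMonoEquiv p).1 i) ([a, b, c].get i) :=
        (finThreeStrictMonoEquiv.tsum_eq _).symm
    _ = _ := by
      simp [finThreeStrictMonoEquiv, Fin.prod_univ_three, ENNReal.tsum_prod', mul_assoc]

theorem tsum_ite_lt_eq_tsum_add (k : ℕ+) (g : ℕ+ → ℝ≥0∞) :
    ∑' m, (if k < m then g m else 0) = ∑' j, g (k + j) := by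
  rw [← (add_right_injective k).tsum_eq]
  · simp [PNat.lt_add_right]
  · intro m hm
    have hkm : k < m := by by_contra h; simp [h] at hm
    exact ⟨m - k, PNat.add_sub_of_lt hkm⟩

theorem tsum_tsum_split_by_order (F : ℕ+ → ℕ+ → ℝ≥0∞) :
    ∑' (k : ℕ+) (m : ℕ+), F k m =
      ∑' (k : ℕ+) (j : ℕ+), F k (k + j) + ∑' k, F k k + ∑' (m : ℕ+) (d : ℕ+), F (m + d) m := by
  have hsplit (k : ℕ+) : ∑' m, F k m =
      ∑' j, F k (k + j) + F k k + ∑' m, (if m < k then F k m else 0) := by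
    rw [← tsum_ite_lt_eq_tsum_add, ← tsum_ite_eq k (F k), ← ENNReal.tsum_add, ← ENNReal.tsum_add]
    refine tsum_congr fun m => ?_
    rcases lt_trichotomy k m with h | rfl | h
    · simp [h, h.ne', h.not_gt]
    · simp
    · simp [h, h.ne, h.not_gt]
  simp_rw [hsplit, ENNReal.tsum_add]
  rw [ENNReal.tsum_comm (f := fun k m => if m < k then F k m else 0)]
  simp_rw [tsum_ite_lt_eq_tsum_add]

/- The five terms are the contributions of `k < m`, `k = m`, `m < k < m + u`, `k = m + u` and
`m + u < k`. -/
theorem tsum_tsum_tsum_split_by_order (F : ℕ+ → ℕ+ → ℕ+ → ℝ≥0∞) :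
    ∑' (k : ℕ+) (m : ℕ+) (u : ℕ+), F k m (m + u) =
      ∑' (k : ℕ+) (j : ℕ+) (u : ℕ+), F k (k + j) (k + j + u) +
      ∑' (m : ℕ+) (u : ℕ+), F m m (m + u) +
      ∑' (m : ℕ+) (d : ℕ+) (e : ℕ+), F (m + d) m (m + d + e) +
      ∑' (m : ℕ+) (d : ℕ+), F (m + d) m (m + d) +
      ∑' (m : ℕ+) (u : ℕ+) (e : ℕ+), F (m + u + e) m (m + u) := by
  have inner (m : ℕ+) : ∑' (d : ℕ+) (u : ℕ+), F (m + d) m (m + u) =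
      ∑' (d : ℕ+) (e : ℕ+), F (m + d) m (m + d + e) + ∑' d, F (m + d) m (m + d) +
      ∑' (u : ℕ+) (e : ℕ+), F (m + u + e) m (m + u) := by
    rw [tsum_tsum_split_by_order fun d u => F (m + d) m (m + u)]
    simp only [add_assoc]
  rw [tsum_tsum_split_by_order fun k m => ∑' u, F k m (m + u)]
  simp only [inner, ENNReal.tsum_add, add_assoc]

theorem emzv_singleton_mul_singleton (a b : ℕ) :
    emzv [a] * emzv [b] = emzv [a, b] + emzv [a + b] + emzv [b, a] := by
  rw [emzv_singleton, emzv_singleton, ← ENNReal.tsum_mul_right]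
  simp_rw [← ENNReal.tsum_mul_left]
  rw [tsum_tsum_split_by_order fun k m => invPow k a * invPow m b, emzv_pair, emzv_pair,
    emzv_singleton]
  simp only [invPow_mul_invPow, mul_comm (invPow (_ + _) a)]

theorem emzv_singleton_mul_pair (a b c : ℕ) :
    emzv [a] * emzv [b, c] = emzv [a, b, c] + emzv [a + b, c] + emzv [b, a, c] +
      emzv [b, a + c] + emzv [b, c, a] := by
  rw [emzv_singleton, emzv_pair, ← ENNReal.tsum_mul_right]
  simp_rw [← ENNReal.tsum_mul_left]
  rw [tsum_tsum_tsum_split_by_order fun k m n => invPow k a * (invPow m b * invPow n c)]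
  simp only [emzv_triple, emzv_pair, ← invPow_mul_invPow]
  simp only [mul_comm, mul_left_comm, mul_assoc]

noncomputable def tornheim (a b c : ℕ) : ℝ≥0∞ :=
  ∑' (m : ℕ+) (u : ℕ+), invPow m a * invPow u b * invPow (m + u) c

theorem emzv_singleton_mul_singleton_eq_tornheim (a b : ℕ) :
    emzv [a] * emzv [b] = tornheim a b 0 := by
  rw [emzv_singleton, emzv_singleton, ← ENNReal.tsum_mul_right]
  simp_rw [← ENNReal.tsum_mul_left]
  simp [tornheim]

theorem tornheim_comm (a b c : ℕ) : tornheim a b c = tornheim b a c := by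
  rw [tornheim, ENNReal.tsum_comm]
  simp only [tornheim, add_comm, mul_comm]

theorem tornheim_zero_middle (a c : ℕ) : tornheim a 0 c = emzv [a, c] := by
  simp [tornheim, emzv_pair]

theorem tornheim_zero_left (b c : ℕ) : tornheim 0 b c = emzv [b, c] := by
  rw [tornheim_comm, tornheim_zero_middle]

theorem tornheim_succ_succ (a b c : ℕ) :
    tornheim (a + 1) (b + 1) c = tornheim (a + 1) b (c + 1) + tornheim a (b + 1) (c + 1) := by
  simp only [tornheim, invPow_partial_fraction, ENNReal.tsum_add]

noncomputable def tornheim3 (a b c d e : ℕ) : ℝ≥0∞ :=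
  ∑' (m : ℕ+) (u : ℕ+) (v : ℕ+),
    invPow m a * invPow u b * invPow (m + u) c * invPow v d * invPow (m + u + v) e

theorem tornheim3_zero_zero (a c e : ℕ) : tornheim3 a 0 c 0 e = emzv [a, c, e] := by
  simp [tornheim3, emzv_triple]

theorem tornheim3_zero_left (b c d e : ℕ) : tornheim3 0 b c d e = tornheim3 b 0 c d e := by
  rw [tornheim3, ENNReal.tsum_comm]
  simp only [tornheim3, add_comm, mul_comm]

theorem tornheim3_zero_middle_comm (a b d e : ℕ) : tornheim3 a b 0 d e = tornheim3 a d 0 b e := by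
  rw [tornheim3, tornheim3]
  refine tsum_congr fun m => ?_
  rw [ENNReal.tsum_comm]
  refine tsum_congr fun x => tsum_congr fun y => ?_
  rw [add_right_comm m y x]
  simp only [invPow_zero, mul_one]
  ring

theorem tornheim3_succ_succ_left (a b c d e : ℕ) :
    tornheim3 (a + 1) (b + 1) c d e =
      tornheim3 (a + 1) b (c + 1) d e + tornheim3 a (b + 1) (c + 1) d e := by
  simp only [tornheim3, invPow_partial_fraction, add_mul, ENNReal.tsum_add]

theorem tornheim3_succ_succ_right (a b c d e : ℕ) :
    tornheim3 a b (c + 1) (d + 1) e =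
      tornheim3 a b (c + 1) d (e + 1) + tornheim3 a b c (d + 1) (e + 1) := by
  simp only [tornheim3, mul_assoc (invPow _ a * invPow _ b), invPow_partial_fraction, mul_add,
    ENNReal.tsum_add]

theorem hasSum_sub_add_of_antitone {f : ℕ → ℝ} (hf : Antitone f) (h0 : Tendsto f atTop (𝓝 0))
    (n : ℕ) : HasSum (fun v => f v - f (v + n)) (∑ i ∈ Finset.range n, f i) := by
  rw [hasSum_iff_tendsto_nat_of_nonneg fun v => sub_nonneg.2 (hf (Nat.le_add_right v n))]
  have hpartial (N : ℕ) : ∑ v ∈ Finset.range N, (f v - f (v + n)) =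
      ∑ i ∈ Finset.range n, f i - ∑ i ∈ Finset.range n, f (N + i) := by
    have h1 := Finset.sum_range_add f N n
    have h2 := Finset.sum_range_add f n N
    rw [add_comm n N] at h2
    simp only [Finset.sum_sub_distrib, add_comm _ n]
    linarith
  simp_rw [hpartial]
  simpa using tendsto_const_nhds.sub
    (tendsto_finsetSum _ fun i _ => h0.comp (tendsto_add_atTop_nat i))

noncomputable def eharmonic (n : ℕ+) : ℝ≥0∞ := ∑' k : ℕ+, if k ≤ n then invPow k 1 else 0

theorem eharmonic_eq_ofReal (n : ℕ+) : eharmonic n = ENNReal.ofReal (harmonic n) := by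
  rw [eharmonic, ← Equiv.pnatEquivNat.symm.tsum_eq, tsum_eq_sum (s := Finset.range n)]
  · rw [harmonic, Rat.cast_sum, ENNReal.ofReal_sum_of_nonneg fun _ _ => by positivity]
    refine Finset.sum_congr rfl fun i hi => ?_
    rw [Finset.mem_range] at hi
    have hle : i.succPNat ≤ n := by rw [← PNat.coe_le_coe, Nat.succPNat_coe]; omega
    simp [hle, invPow]
  · intro i hi
    rw [Finset.mem_range, not_lt] at hi
    have hgt : ¬ i.succPNat ≤ n := by rw [← PNat.coe_le_coe, Nat.succPNat_coe]; omega
    simp [hgt]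

theorem tsum_invPow_mul_invPow_add (n : ℕ+) :
    ∑' v : ℕ+, invPow v 1 * invPow (n + v) 1 = invPow n 1 * eharmonic n := by
  have hf : Antitone fun i : ℕ => ((i : ℝ) + 1)⁻¹ := fun i j hij => by
    dsimp only
    gcongr
  have h0 : Tendsto (fun i : ℕ => ((i : ℝ) + 1)⁻¹) atTop (𝓝 0) := by
    simpa using tendsto_one_div_add_atTop_nhds_zero_nat (𝕜 := ℝ)
  have hsum : HasSum (fun i : ℕ => (((i : ℝ) + 1) * (n + (i + 1)))⁻¹) ((harmonic n : ℝ) / n) := by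
    have hH : (harmonic n : ℝ) = ∑ i ∈ Finset.range n, ((i : ℝ) + 1)⁻¹ := by simp [harmonic]
    rw [hH]
    refine ((hasSum_sub_add_of_antitone hf h0 n).div_const (n : ℝ)).congr_fun fun i => ?_
    push_cast
    field_simp
    ring
  rw [← Equiv.pnatEquivNat.symm.tsum_eq]
  calc _ = ∑' i : ℕ, ENNReal.ofReal ((((i : ℝ) + 1) * (n + (i + 1)))⁻¹) := by
        refine tsum_congr fun i => ?_
        rw [invPow, invPow, ← ENNReal.ofReal_mul (by positivity)]
        simp [mul_comm]
    _ = ENNReal.ofReal ((harmonic n : ℝ) / n) := by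
        rw [← ENNReal.ofReal_tsum_of_nonneg (fun _ => by positivity) hsum.summable, hsum.tsum_eq]
    _ = _ := by
        rw [eharmonic_eq_ofReal, invPow, ← ENNReal.ofReal_mul (by positivity), pow_one,
          div_eq_inv_mul]

theorem tsum_invPow_mul_eharmonic (a : ℕ) :
    ∑' m, invPow m a * eharmonic m = emzv [a + 1] + emzv [1, a] := by
  simp_rw [eharmonic, ← ENNReal.tsum_mul_left, mul_ite, mul_zero]
  rw [tsum_tsum_split_by_order fun m k => if k ≤ m then invPow m a * invPow k 1 else 0]
  simp [emzv_singleton, emzv_pair, not_le.2 (PNat.lt_add_right _ _), (PNat.lt_add_right _ _).le,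
    invPow_mul_invPow, mul_comm]

theorem tsum_tsum_invPow_mul_eharmonic (a b : ℕ) :
    ∑' (m : ℕ+) (u : ℕ+), invPow m a * invPow (m + u) b * eharmonic (m + u) =
      emzv [1, a, b] + emzv [a + 1, b] + emzv [a, 1, b] + emzv [a, b + 1] := by
  simp_rw [eharmonic, ← ENNReal.tsum_mul_left, mul_ite, mul_zero]
  conv_lhs => enter [1, m]; rw [ENNReal.tsum_comm]
  rw [ENNReal.tsum_comm, tsum_tsum_tsum_split_by_order fun k m n =>
    if k ≤ n then invPow m a * invPow n b * invPow k 1 else 0]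
  have hle (k j u : ℕ+) : k ≤ k + j + u :=
    ((PNat.lt_add_right k j).trans (PNat.lt_add_right _ u)).le
  simp [emzv_triple, emzv_pair, hle, not_le.2 (PNat.lt_add_right _ _), (PNat.lt_add_right _ _).le,
    invPow_succ _ a, invPow_succ _ b]
  simp only [mul_comm, mul_left_comm, mul_assoc]

theorem tornheim_one_one (s : ℕ) : tornheim s 1 1 = emzv [s + 2] + emzv [1, s + 1] := by
  simp_rw [tornheim, mul_assoc, ENNReal.tsum_mul_left, tsum_invPow_mul_invPow_add, ← mul_assoc,
    invPow_mul_invPow]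
  exact tsum_invPow_mul_eharmonic (s + 1)

theorem tornheim3_zero_one_one (a b : ℕ) : tornheim3 a 0 b 1 1 =
    emzv [1, a, b + 1] + emzv [a + 1, b + 1] + emzv [a, 1, b + 1] + emzv [a, b + 2] := by
  have inner (m u : ℕ+) : ∑' v : ℕ+, invPow m a * invPow u 0 * invPow (m + u) b * invPow v 1 *
      invPow (m + u + v) 1 = invPow m a * invPow (m + u) (b + 1) * eharmonic (m + u) := by
    calc _ = invPow m a * invPow (m + u) b * ∑' v, invPow v 1 * invPow (m + u + v) 1 := by
          rw [← ENNReal.tsum_mul_left]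
          simp [mul_assoc]
      _ = _ := by rw [tsum_invPow_mul_invPow_add, ← invPow_mul_invPow (m + u) b 1]; ring
  simp_rw [tornheim3, inner]
  exact tsum_tsum_invPow_mul_eharmonic a (b + 1)

theorem emzv_singleton_ne_top {s : ℕ} (hs : 2 ≤ s) : emzv [s] ≠ ∞ := by
  have hsum : Summable fun n : ℕ+ => ((n : ℝ) ^ s)⁻¹ :=
    (Real.summable_nat_pow_inv.2 hs).comp_injective PNat.coe_injective
  simp only [emzv_singleton, invPow]
  rw [← ENNReal.ofReal_tsum_of_nonneg (fun _ => by positivity) hsum]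
  exact ENNReal.ofReal_ne_top

theorem tsum_invPow_add_two_le (m : ℕ+) : ∑' u : ℕ+, invPow (m + u) 2 ≤ invPow m 1 := by
  set f : ℕ → ℝ := fun v => ((m : ℝ) + v)⁻¹
  have hf : Antitone f := fun i j hij => by simp only [f]; gcongr
  have h0 : Tendsto f atTop (𝓝 0) := tendsto_inv_atTop_zero.comp
    (tendsto_atTop_add_const_left _ _ tendsto_natCast_atTop_atTop)
  have hsum := hasSum_sub_add_of_antitone hf h0 1
  rw [← Equiv.pnatEquivNat.symm.tsum_eq]
  calc _ ≤ ∑' v : ℕ, ENNReal.ofReal (f v - f (v + 1)) := by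
        refine ENNReal.tsum_le_tsum fun v => ENNReal.ofReal_le_ofReal ?_
        have hdiff : f v - f (v + 1) = (((m : ℝ) + v) * (m + v + 1))⁻¹ := by
          simp only [f]; push_cast; field_simp; ring
        rw [hdiff]
        push_cast
        gcongr
        simp only [Equiv.pnatEquivNat_symm_apply, Nat.succPNat_coe, Nat.cast_succ]
        nlinarith
    _ = invPow m 1 := by
        rw [← ENNReal.ofReal_tsum_of_nonneg (fun v => sub_nonneg.2 (hf (by omega))) hsum.summable,
          hsum.tsum_eq]
        simp [f, invPow]

theorem emzv_pair_ne_top {a b : ℕ} (ha : 1 ≤ a) (hb : 2 ≤ b) : emzv [a, b] ≠ ∞ := by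
  refine ne_top_of_le_ne_top (emzv_singleton_ne_top le_rfl) ?_
  calc emzv [a, b] ≤ emzv [1, 2] := by
        rw [emzv_pair, emzv_pair]
        gcongr with m u
        · exact invPow_le_invPow ha m
        · exact invPow_le_invPow hb (m + u)
    _ ≤ emzv [2] := by
        rw [emzv_pair, emzv_singleton]
        gcongr with m
        rw [ENNReal.tsum_mul_left, ← invPow_mul_invPow m 1 1]
        gcongr
        exact tsum_invPow_add_two_le m

theorem emzv_triple_ne_top {a b c : ℕ} (ha : 1 ≤ a) (hb : 1 ≤ b) (hc : 2 ≤ c) :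
    emzv [a, b, c] ≠ ∞ := by
  refine ne_top_of_le_ne_top (emzv_pair_ne_top le_rfl le_rfl) ?_
  calc emzv [a, b, c] ≤ emzv [1, 1, 2] := by
        rw [emzv_triple, emzv_triple]
        gcongr with m u v
        · exact invPow_le_invPow ha m
        · exact invPow_le_invPow hb (m + u)
        · exact invPow_le_invPow hc (m + u + v)
    _ ≤ emzv [1, 2] := by
        rw [emzv_triple, emzv_pair]
        gcongr with m u
        rw [ENNReal.tsum_mul_left, mul_assoc, ← invPow_mul_invPow (m + u) 1 1]
        gcongr
        exact tsum_invPow_add_two_le (m + u)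

end MZV

open MZV in
theorem mzv_rel_16 :
    4 * mzv [1,4] - 2 * mzv [2,3] - mzv [3,2] + mzv [1,1,3] + 3 * mzv [1,2,2] = 0 := by
  have stuffle₁ := emzv_singleton_mul_singleton 2 3
  have stuffle₂ := emzv_singleton_mul_pair 2 1 2
  have tornheim₁ := emzv_singleton_mul_singleton_eq_tornheim 2 3
  have tornheim₂ := tornheim_one_one 3
  have euler := tornheim_one_one 1
  have tornheim₃ := tornheim3_zero_one_one 1 2
  have tornheim₄ := tornheim3_zero_one_one 2 1
  -- The swaps are instantiated at successors, where `simp` cannot loop on them.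
  simp only [tornheim_succ_succ, tornheim_zero_middle, tornheim_zero_left, tornheim3_succ_succ_left,
    tornheim3_succ_succ_right, tornheim3_zero_zero, tornheim3_zero_left (_ + 1),
    tornheim3_zero_middle_comm _ 0 (_ + 1), Nat.reduceAdd] at *
  apply_fun ENNReal.toReal at stuffle₁ stuffle₂ tornheim₁ tornheim₂ euler tornheim₃ tornheim₄
  simp only [ENNReal.toReal_add, ENNReal.toReal_mul, ← mzv_eq_toReal_emzv, ne_eq,
    ENNReal.add_eq_top, emzv_singleton_ne_top, emzv_pair_ne_top, emzv_triple_ne_top,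
    Nat.reduceLeDiff, or_self, not_false_eq_true] at *
  have zeta_one_two : mzv [1, 2] = mzv [3] := by linarith
  rw [zeta_one_two] at stuffle₂
  linarith
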